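/- Let σ* = (x*, y*) be a Nash equilibrium of the game given by U, and suppose C > 0 satisfies C·‖σ* − σ‖₂ ≤ ε(σ) for every σ ∈ Δ^n × Δ^m. Fix μ > 0 and let (σ^{r,n})_{n≥1} be a sequence of reference profiles with ε(σ^{r,n}) ≤ ε(σ^{r,n−1})/2 for all n ≥ 2, and for each n let σ^{*,n} be a saddle point of the SCCP with reference σ^{r,n}. Then for every n ≥ 1 and every profile σ ∈ Δ^n × Δ^m, ‖σ* − σ‖₂ ≤ ε(σ^{r,1})/(C·2^{n−1}) + ‖σ^{*,n} − σ‖₂. -/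

import Mathlib

open Finset

/-- Squared Euclidean norm of a vector. -/
noncomputable def sqnorm {k : ℕ} (v : Fin k → ℝ) : ℝ := ∑ i, (v i) ^ 2

/-- Euclidean norm of a concatenated profile vector in ℝ^(k+l). -/
noncomputable def pnorm {k l : ℕ} (v : Fin k → ℝ) (w : Fin l → ℝ) : ℝ :=
  Real.sqrt (sqnorm v + sqnorm w)

/-- Bilinear payoff xᵀUy. -/
def payoff {k l : ℕ} (U : Matrix (Fin k) (Fin l) ℝ) (x : Fin k → ℝ) (y : Fin l → ℝ) : ℝ :=
  ∑ i, ∑ j, x i * U i j * y j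

/-- Regularized SCCP objective G(x,y) = -xᵀUy + μ/2 ‖x - xʳ‖² - μ/2 ‖y - yʳ‖². -/
noncomputable def sccpObj {k l : ℕ} (U : Matrix (Fin k) (Fin l) ℝ) (μ : ℝ)
    (xr : Fin k → ℝ) (yr : Fin l → ℝ) (x : Fin k → ℝ) (y : Fin l → ℝ) : ℝ :=
  -(payoff U x y) + μ / 2 * sqnorm (x - xr) - μ / 2 * sqnorm (y - yr)

/-- (x̂, ŷ) is a saddle point of the SCCP with weight μ and reference (xr, yr). -/
def IsSaddle {k l : ℕ} (U : Matrix (Fin k) (Fin l) ℝ) (μ : ℝ)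
    (xr : Fin k → ℝ) (yr : Fin l → ℝ) (xh : Fin k → ℝ) (yh : Fin l → ℝ) : Prop :=
  xh ∈ stdSimplex ℝ (Fin k) ∧ yh ∈ stdSimplex ℝ (Fin l) ∧
  (∀ y ∈ stdSimplex ℝ (Fin l), sccpObj U μ xr yr xh y ≤ sccpObj U μ xr yr xh yh) ∧
  (∀ x ∈ stdSimplex ℝ (Fin k), sccpObj U μ xr yr xh yh ≤ sccpObj U μ xr yr x yh)

/-- (x*, y*) is a Nash equilibrium of the zero-sum game with payoff matrix U. -/
def IsNash {k l : ℕ} (U : Matrix (Fin k) (Fin l) ℝ)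
    (xs : Fin k → ℝ) (ys : Fin l → ℝ) : Prop :=
  xs ∈ stdSimplex ℝ (Fin k) ∧ ys ∈ stdSimplex ℝ (Fin l) ∧
  (∀ x ∈ stdSimplex ℝ (Fin k), payoff U x ys ≤ payoff U xs ys) ∧
  (∀ y ∈ stdSimplex ℝ (Fin l), payoff U xs ys ≤ payoff U xs y)

/-- Exploitability ε(σ) = max_{x'} x'ᵀUy - min_{y'} xᵀUy'. -/
noncomputable def exploit {k l : ℕ} (U : Matrix (Fin k) (Fin l) ℝ)
    (x : Fin k → ℝ) (y : Fin l → ℝ) : ℝ :=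
  sSup ((fun x' => payoff U x' y) '' stdSimplex ℝ (Fin k)) -
  sInf ((fun y' => payoff U x y') '' stdSimplex ℝ (Fin l))

/-- Transformed loss for the x-player: ℓ_x = -Uy + μ(x - xʳ). -/
noncomputable def lossX {k l : ℕ} (U : Matrix (Fin k) (Fin l) ℝ) (μ : ℝ)
    (xr : Fin k → ℝ) (x : Fin k → ℝ) (y : Fin l → ℝ) : Fin k → ℝ :=
  fun i => -(∑ j, U i j * y j) + μ * (x i - xr i)

/-- Transformed loss for the y-player: ℓ_y = Uᵀx + μ(y - yʳ). -/
noncomputable def lossY {k l : ℕ} (U : Matrix (Fin k) (Fin l) ℝ) (μ : ℝ)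
    (yr : Fin l → ℝ) (x : Fin k → ℝ) (y : Fin l → ℝ) : Fin l → ℝ :=
  fun j => (∑ i, U i j * x i) + μ * (y j - yr j)

/-- Immediate regret r = ⟨ℓ, p⟩·𝟏 - ℓ. -/
noncomputable def imRegret {k : ℕ} (ℓ : Fin k → ℝ) (p : Fin k → ℝ) : Fin k → ℝ :=
  fun i => (∑ i', ℓ i' * p i') - ℓ i

/-!
The saddle point σ̂ = (x̂, ŷ) of the SCCP is at least as close to σ* as its reference σʳ.
Each player's regularized objective is μ-strongly convex, so at the saddle point it grows
quadratically: G(x*, ŷ) ≥ G(x̂, ŷ) + μ/2 ‖x* - x̂‖² and G(x̂, y*) ≤ G(x̂, ŷ) - μ/2 ‖y* - ŷ‖².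
Subtracting, the bilinear terms leave x̂ᵀUy* - x*ᵀUŷ, which the Nash inequalities
x̂ᵀUy* ≤ x*ᵀUy* ≤ x*ᵀUŷ make nonpositive, and what remains is ‖σ* - σ̂‖² ≤ ‖σ* - σʳ‖².
Hence C ‖σ* - σ̂ⁿ‖ ≤ ε(σʳⁿ) ≤ ε(σʳ¹) / 2ⁿ⁻¹, and the triangle inequality through σ̂ⁿ finishes.
-/

open Matrix
open scoped RealInnerProductSpace Topology

theorem nonneg_of_forall_mul_add_sq_mul_nonneg {D B : ℝ}
    (h : ∀ t ∈ Set.Ioc (0 : ℝ) 1, 0 ≤ t * D + t ^ 2 * B) : 0 ≤ D := by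
  have hlim : Filter.Tendsto (fun t : ℝ => D + t * B) (𝓝[>] 0) (𝓝 D) := by
    refine (Continuous.tendsto' ?_ 0 D (by simp)).mono_left nhdsWithin_le_nhds
    fun_prop
  refine ge_of_tendsto hlim ?_
  filter_upwards [Ioc_mem_nhdsGT one_pos] with t ht
  exact nonneg_of_mul_nonneg_right (by linarith [h t ht]) ht.1

section QuadraticGrowth

variable {E : Type*} [NormedAddCommGroup E] [InnerProductSpace ℝ E]

theorem IsMinOn.inner_add_sq_norm_sub_quadratic_growth {S : Set E} (hS : Convex ℝ S)
    {c a x₀ x : E} {μ : ℝ} (hx₀ : x₀ ∈ S)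
    (hmin : IsMinOn (fun z => ⟪c, z⟫ + μ / 2 * ‖z - a‖ ^ 2) S x₀) (hx : x ∈ S) :
    ⟪c, x₀⟫ + μ / 2 * ‖x₀ - a‖ ^ 2 + μ / 2 * ‖x - x₀‖ ^ 2 ≤ ⟪c, x⟫ + μ / 2 * ‖x - a‖ ^ 2 := by
  set D := ⟪c, x - x₀⟫ + μ * ⟪x₀ - a, x - x₀⟫
  have along_segment : ∀ t : ℝ,
      ⟪c, x₀ + t • (x - x₀)⟫ + μ / 2 * ‖x₀ + t • (x - x₀) - a‖ ^ 2 =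
        ⟪c, x₀⟫ + μ / 2 * ‖x₀ - a‖ ^ 2 + (t * D + t ^ 2 * (μ / 2 * ‖x - x₀‖ ^ 2)) := by
    intro t
    rw [add_sub_right_comm, norm_add_sq_real, inner_add_right, inner_smul_right,
      inner_smul_right, norm_smul, mul_pow, Real.norm_eq_abs, sq_abs]
    ring
  have hD : 0 ≤ D := by
    refine nonneg_of_forall_mul_add_sq_mul_nonneg (B := μ / 2 * ‖x - x₀‖ ^ 2) fun t ht => ?_
    have := isMinOn_iff.mp hmin _ (hS.add_smul_sub_mem hx₀ hx (Set.Ioc_subset_Icc_self ht))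
    rw [along_segment] at this
    linarith
  have := along_segment 1
  simp only [one_smul, add_sub_cancel] at this
  nlinarith

end QuadraticGrowth

theorem sqnorm_eq_norm_toLp_sq {k : ℕ} (v : Fin k → ℝ) :
    sqnorm v = ‖WithLp.toLp 2 v‖ ^ 2 := by
  simp [sqnorm, EuclideanSpace.norm_sq_eq]

theorem quadratic_growth_on_stdSimplex {k : ℕ} {c a x₀ : Fin k → ℝ} {μ : ℝ}
    (hx₀ : x₀ ∈ stdSimplex ℝ (Fin k))
    (hmin : ∀ x ∈ stdSimplex ℝ (Fin k),
      c ⬝ᵥ x₀ + μ / 2 * sqnorm (x₀ - a) ≤ c ⬝ᵥ x + μ / 2 * sqnorm (x - a))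
    {x : Fin k → ℝ} (hx : x ∈ stdSimplex ℝ (Fin k)) :
    c ⬝ᵥ x₀ + μ / 2 * sqnorm (x₀ - a) + μ / 2 * sqnorm (x - x₀) ≤
      c ⬝ᵥ x + μ / 2 * sqnorm (x - a) := by
  set S : Set (EuclideanSpace ℝ (Fin k)) := WithLp.ofLp ⁻¹' stdSimplex ℝ (Fin k)
  have hS : Convex ℝ S :=
    (convex_stdSimplex ℝ (Fin k)).linear_preimage (WithLp.linearEquiv 2 ℝ (Fin k → ℝ)).toLinearMap
  have hmin' : IsMinOn
      (fun z => ⟪WithLp.toLp 2 c, z⟫ + μ / 2 * ‖z - WithLp.toLp 2 a‖ ^ 2) S (WithLp.toLp 2 x₀) :=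
    fun z hz => by
      simpa [EuclideanSpace.inner_eq_star_dotProduct, sqnorm_eq_norm_toLp_sq, dotProduct_comm]
        using hmin _ hz
  simpa [EuclideanSpace.inner_eq_star_dotProduct, sqnorm_eq_norm_toLp_sq, dotProduct_comm]
    using hmin'.inner_add_sq_norm_sub_quadratic_growth hS hx₀ (x := WithLp.toLp 2 x) hx

theorem sqnorm_nonneg {k : ℕ} (v : Fin k → ℝ) : 0 ≤ sqnorm v := by
  rw [sqnorm_eq_norm_toLp_sq]
  positivity

theorem payoff_eq_dotProduct_mulVec {k l : ℕ} (U : Matrix (Fin k) (Fin l) ℝ)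
    (x : Fin k → ℝ) (y : Fin l → ℝ) : payoff U x y = x ⬝ᵥ (U *ᵥ y) := by
  simp only [payoff, dotProduct, mulVec, mul_sum, mul_assoc]

theorem payoff_eq_vecMul_dotProduct {k l : ℕ} (U : Matrix (Fin k) (Fin l) ℝ)
    (x : Fin k → ℝ) (y : Fin l → ℝ) : payoff U x y = (x ᵥ* U) ⬝ᵥ y := by
  rw [payoff_eq_dotProduct_mulVec, dotProduct_mulVec]

theorem IsSaddle.pnorm_sub_le_of_isNash {k l : ℕ} {U : Matrix (Fin k) (Fin l) ℝ} {μ : ℝ}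
    (hμ : 0 < μ) {xr xh xs : Fin k → ℝ} {yr yh ys : Fin l → ℝ}
    (hsad : IsSaddle U μ xr yr xh yh) (hNE : IsNash U xs ys) :
    pnorm (xs - xh) (ys - yh) ≤ pnorm (xs - xr) (ys - yr) := by
  obtain ⟨hxh, hyh, hy_max, hx_min⟩ := hsad
  obtain ⟨hxs, hys, hxs_best, hys_best⟩ := hNE
  have payoff_x : ∀ x, -(U *ᵥ yh) ⬝ᵥ x = -payoff U x yh := fun x => by
    rw [neg_dotProduct, dotProduct_comm, payoff_eq_dotProduct_mulVec]
  have growth_x := quadratic_growth_on_stdSimplex (c := -(U *ᵥ yh)) (a := xr) (μ := μ) hxh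
    (fun x hx => by
      have := hx_min x hx
      rw [payoff_x, payoff_x]
      simp only [sccpObj] at this
      linarith) hxs
  have growth_y := quadratic_growth_on_stdSimplex (c := xh ᵥ* U) (a := yr) (μ := μ) hyh
    (fun y hy => by
      have := hy_max y hy
      rw [← payoff_eq_vecMul_dotProduct, ← payoff_eq_vecMul_dotProduct]
      simp only [sccpObj] at this
      linarith) hys
  rw [payoff_x, payoff_x] at growth_x
  rw [← payoff_eq_vecMul_dotProduct, ← payoff_eq_vecMul_dotProduct] at growth_y
  have h₁ := hxs_best xh hxh
  have h₂ := hys_best yh hyh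
  have hsq : sqnorm (xs - xh) + sqnorm (ys - yh) ≤ sqnorm (xs - xr) + sqnorm (ys - yr) := by
    have : μ / 2 * (sqnorm (xs - xh) + sqnorm (ys - yh)) ≤
        μ / 2 * (sqnorm (xs - xr) + sqnorm (ys - yr)) := by
      nlinarith [sqnorm_nonneg (xh - xr), sqnorm_nonneg (yh - yr)]
    exact le_of_mul_le_mul_left this (by positivity)
  exact Real.sqrt_le_sqrt hsq

noncomputable def profileL2 {k l : ℕ} (x : Fin k → ℝ) (y : Fin l → ℝ) :
    WithLp 2 (EuclideanSpace ℝ (Fin k) × EuclideanSpace ℝ (Fin l)) :=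
  WithLp.toLp 2 (WithLp.toLp 2 x, WithLp.toLp 2 y)

theorem pnorm_sub_eq_dist {k l : ℕ} (x x' : Fin k → ℝ) (y y' : Fin l → ℝ) :
    pnorm (x - x') (y - y') = dist (profileL2 x y) (profileL2 x' y') := by
  rw [dist_eq_norm, WithLp.prod_norm_eq_of_L2, pnorm, sqnorm_eq_norm_toLp_sq,
    sqnorm_eq_norm_toLp_sq]
  rfl

theorem pnorm_sub_le_add {k l : ℕ} (x x' x'' : Fin k → ℝ) (y y' y'' : Fin l → ℝ) :
    pnorm (x - x'') (y - y'') ≤ pnorm (x - x') (y - y') + pnorm (x' - x'') (y' - y'') := by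
  simp only [pnorm_sub_eq_dist]
  exact dist_triangle _ _ _

theorem le_div_two_pow_of_halving {e : ℕ → ℝ} (h : ∀ k, 2 ≤ k → e k ≤ e (k - 1) / 2) :
    ∀ k, 1 ≤ k → e k ≤ e 1 / 2 ^ (k - 1) := by
  intro k hk
  induction k, hk using Nat.le_induction with
  | base => simp
  | succ p hp ih =>
    calc e (p + 1) ≤ e p / 2 := h (p + 1) (by omega)
      _ ≤ e 1 / 2 ^ (p - 1) / 2 := by linarith
      _ = e 1 / 2 ^ (p + 1 - 1) := by
        rw [div_div, ← pow_succ, Nat.sub_add_cancel hp, Nat.add_sub_cancel]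

theorem linear_convergence_with_halving_references_general
    {n m : ℕ}
    (U : Matrix (Fin n) (Fin m) ℝ) (μ : ℝ) (hμ : 0 < μ)
    (xs : Fin n → ℝ) (ys : Fin m → ℝ) (hNE : IsNash U xs ys)
    (C : ℝ) (hC : 0 < C)
    (hMS : ∀ x ∈ stdSimplex ℝ (Fin n), ∀ y ∈ stdSimplex ℝ (Fin m),
      C * pnorm (xs - x) (ys - y) ≤ exploit U x y)
    (xr : ℕ → Fin n → ℝ) (yr : ℕ → Fin m → ℝ)
    (hxr : ∀ k : ℕ, xr k ∈ stdSimplex ℝ (Fin n))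
    (hyr : ∀ k : ℕ, yr k ∈ stdSimplex ℝ (Fin m))
    (hhalf : ∀ k : ℕ, 2 ≤ k →
      exploit U (xr k) (yr k) ≤ exploit U (xr (k - 1)) (yr (k - 1)) / 2)
    (sx : ℕ → Fin n → ℝ) (sy : ℕ → Fin m → ℝ)
    (hsad : ∀ k : ℕ, 1 ≤ k → IsSaddle U μ (xr k) (yr k) (sx k) (sy k)) :
    ∀ k : ℕ, 1 ≤ k → ∀ x ∈ stdSimplex ℝ (Fin n), ∀ y ∈ stdSimplex ℝ (Fin m),
      pnorm (xs - x) (ys - y) ≤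
        exploit U (xr 1) (yr 1) / (C * 2 ^ (k - 1)) + pnorm (sx k - x) (sy k - y) := by
  intro k hk x _ y _
  have hdist : C * pnorm (xs - sx k) (ys - sy k) ≤ exploit U (xr 1) (yr 1) / 2 ^ (k - 1) :=
    calc C * pnorm (xs - sx k) (ys - sy k) ≤ C * pnorm (xs - xr k) (ys - yr k) :=
          mul_le_mul_of_nonneg_left ((hsad k hk).pnorm_sub_le_of_isNash hμ hNE) hC.le
      _ ≤ exploit U (xr k) (yr k) := hMS _ (hxr k) _ (hyr k)
      _ ≤ exploit U (xr 1) (yr 1) / 2 ^ (k - 1) :=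
          le_div_two_pow_of_halving (e := fun k => exploit U (xr k) (yr k)) hhalf k hk
  have hdist' : pnorm (xs - sx k) (ys - sy k) ≤ exploit U (xr 1) (yr 1) / (C * 2 ^ (k - 1)) := by
    rw [mul_comm C, ← div_div, le_div_iff₀ hC, mul_comm]
    exact hdist
  linarith [pnorm_sub_le_add xs (sx k) x ys (sy k) y]

/-- Linear last-iterate convergence with halving exploitability of references. -/
theorem linear_convergence_with_halving_references
    {n m : ℕ} (hn : 0 < n) (hm : 0 < m)
    (U : Matrix (Fin n) (Fin m) ℝ) (μ : ℝ) (hμ : 0 < μ)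
    (xs : Fin n → ℝ) (ys : Fin m → ℝ) (hNE : IsNash U xs ys)
    (C : ℝ) (hC : 0 < C)
    (hMS : ∀ x ∈ stdSimplex ℝ (Fin n), ∀ y ∈ stdSimplex ℝ (Fin m),
      C * pnorm (xs - x) (ys - y) ≤ exploit U x y)
    (xr : ℕ → Fin n → ℝ) (yr : ℕ → Fin m → ℝ)
    (hxr : ∀ k : ℕ, xr k ∈ stdSimplex ℝ (Fin n))
    (hyr : ∀ k : ℕ, yr k ∈ stdSimplex ℝ (Fin m))
    (hhalf : ∀ k : ℕ, 2 ≤ k →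
      exploit U (xr k) (yr k) ≤ exploit U (xr (k - 1)) (yr (k - 1)) / 2)
    (sx : ℕ → Fin n → ℝ) (sy : ℕ → Fin m → ℝ)
    (hsad : ∀ k : ℕ, 1 ≤ k → IsSaddle U μ (xr k) (yr k) (sx k) (sy k)) :
    ∀ k : ℕ, 1 ≤ k → ∀ x ∈ stdSimplex ℝ (Fin n), ∀ y ∈ stdSimplex ℝ (Fin m),
      pnorm (xs - x) (ys - y) ≤
        exploit U (xr 1) (yr 1) / (C * 2 ^ (k - 1)) + pnorm (sx k - x) (sy k - y) :=
  linear_convergence_with_halving_references_general U μ hμ xs ys hNE C hC hMS xr yr hxr hyr hhalf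
    sx sy hsad
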